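/- Let B be a finite-dimensional algebra over k = F_q of global dimension at most 2, and let A1, A2 be finite-dimensional right B-modules with minimal projective resolutions 0 → P2 → P1 → P0 → A1 → 0 and 0 → Q2 → Q1 → Q0 → A2 → 0 and associated 2-periodic complexes C_{A1}, C_{A2}. Then |Hom_{C_2(mod B)}(C_{A1}, C_{A2})| = |Hom_B(A1, A2)| · |Hom_B(P2, Q0)| · |Hom_B(P1, Q2)| · |Hom_B(P0, Q1)| / |Hom_B(P0, Q2)|. -/

import Mathlib

open Function

/-- A submodule `N` of `M` is superfluous if `N ⊔ X = ⊤` implies `X = ⊤`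
for every submodule `X`. -/
def Superfluous {B M : Type} [Ring B] [AddCommGroup M] [Module Bᵐᵒᵖ M]
    (N : Submodule Bᵐᵒᵖ M) : Prop :=
  ∀ X : Submodule Bᵐᵒᵖ M, N ⊔ X = ⊤ → X = ⊤

/-- The (right) global dimension of `B` is at most `n`: every right `B`-module admits
a projective resolution vanishing in degrees `> n`. -/
def GlobalDimLE (B : Type) [Ring B] (n : ℕ) : Prop :=
  ∀ M : ModuleCat.{0} Bᵐᵒᵖ, ∃ (P : ℕ → ModuleCat.{0} Bᵐᵒᵖ)
    (d : ∀ i, P (i + 1) →ₗ[Bᵐᵒᵖ] P i) (e : P 0 →ₗ[Bᵐᵒᵖ] M),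
    (∀ i, Module.Projective Bᵐᵒᵖ (P i)) ∧ Surjective e ∧
    LinearMap.range (d 0) = LinearMap.ker e ∧
    (∀ i, LinearMap.range (d (i + 1)) = LinearMap.ker (d i)) ∧
    (∀ i, n < i → Subsingleton (P i))

/-- A 2-periodic (ℤ/2-graded) complex of right `B`-modules: a pair of maps
`d1 : M1 → M0` and `d0 : M0 → M1` with `d0 ∘ d1 = 0` and `d1 ∘ d0 = 0`. -/
structure Cplx2 (B : Type) [Ring B] : Type 1 where
  X1 : ModuleCat.{0} Bᵐᵒᵖ
  X0 : ModuleCat.{0} Bᵐᵒᵖ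
  d1 : X1 →ₗ[Bᵐᵒᵖ] X0
  d0 : X0 →ₗ[Bᵐᵒᵖ] X1
  h01 : ∀ x, d0 (d1 x) = 0
  h10 : ∀ x, d1 (d0 x) = 0

namespace Cplx2

variable {B : Type} [Ring B]

/-- Morphisms of 2-periodic complexes: pairs of linear maps commuting with the
differentials; they form an additive subgroup of the product of hom groups. -/
def homSet (C D : Cplx2 B) :
    AddSubgroup ((C.X1 →ₗ[Bᵐᵒᵖ] D.X1) × (C.X0 →ₗ[Bᵐᵒᵖ] D.X0)) where
  carrier := {s | (∀ x, D.d1 (s.1 x) = s.2 (C.d1 x)) ∧ (∀ x, D.d0 (s.2 x) = s.1 (C.d0 x))}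
  add_mem' := fun ha hb =>
    ⟨fun x => by simp [ha.1 x, hb.1 x], fun x => by simp [ha.2 x, hb.2 x]⟩
  zero_mem' := ⟨fun x => by simp, fun x => by simp⟩
  neg_mem' := fun ha => ⟨fun x => by simp [ha.1 x], fun x => by simp [ha.2 x]⟩

/-- The type of morphisms of 2-periodic complexes. -/
abbrev Hom (C D : Cplx2 B) : Type := C.homSet D

/-- Composition of morphisms of 2-periodic complexes. -/
def Hom.comp {C D E : Cplx2 B} (g : D.Hom E) (f : C.Hom D) : C.Hom E :=
  ⟨(g.val.1 ∘ₗ f.val.1, g.val.2 ∘ₗ f.val.2),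
    ⟨fun x => by simp [g.prop.1, f.prop.1], fun x => by simp [g.prop.2, f.prop.2]⟩⟩

/-- The identity morphism of a 2-periodic complex. -/
def Hom.id (C : Cplx2 B) : C.Hom C :=
  ⟨(LinearMap.id, LinearMap.id), ⟨fun _ => rfl, fun _ => rfl⟩⟩

/-- Two 2-periodic complexes are isomorphic (in the abelian category `C_2(mod B)`). -/
def Iso (C D : Cplx2 B) : Prop :=
  ∃ f : C.Hom D, Bijective f.val.1 ∧ Bijective f.val.2

/-- Direct sum of two 2-periodic complexes. -/
def dsum (C D : Cplx2 B) : Cplx2 B where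
  X1 := ModuleCat.of Bᵐᵒᵖ (C.X1 × D.X1)
  X0 := ModuleCat.of Bᵐᵒᵖ (C.X0 × D.X0)
  d1 := C.d1.prodMap D.d1
  d0 := C.d0.prodMap D.d0
  h01 := fun x => Prod.ext (C.h01 x.1) (D.h01 x.2)
  h10 := fun x => Prod.ext (C.h10 x.1) (D.h10 x.2)

/-- The shift (involution `*`) of a 2-periodic complex: components interchanged
and differentials negated. -/
def shift (C : Cplx2 B) : Cplx2 B where
  X1 := C.X0
  X0 := C.X1
  d1 := -C.d0
  d0 := -C.d1
  h01 := fun x => by simp [C.h10]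
  h10 := fun x => by simp [C.h01]

/-- The degree `0` homology `H_0 = ker d0 / im d1` of a 2-periodic complex. -/
abbrev H0 (C : Cplx2 B) :=
  (LinearMap.ker C.d0) ⧸ ((LinearMap.range C.d1).comap (LinearMap.ker C.d0).subtype)

/-- A 2-periodic complex is acyclic if `H_0` and `H_1` both vanish. -/
def Acyclic (C : Cplx2 B) : Prop :=
  LinearMap.range C.d1 = LinearMap.ker C.d0 ∧ LinearMap.range C.d0 = LinearMap.ker C.d1

/-- Both components are projective modules. -/
def Proj (C : Cplx2 B) : Prop :=
  Module.Projective Bᵐᵒᵖ C.X1 ∧ Module.Projective Bᵐᵒᵖ C.X0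

/-- Both components are finitely generated (equivalently, finite-dimensional over `k`). -/
def FinDim (C : Cplx2 B) : Prop :=
  Module.Finite Bᵐᵒᵖ C.X1 ∧ Module.Finite Bᵐᵒᵖ C.X0

end Cplx2

/-- The acyclic 2-periodic complex `K_P`: both components `P`, `d1 = id`, `d0 = 0`. -/
def KP {B : Type} [Ring B] (P : ModuleCat.{0} Bᵐᵒᵖ) : Cplx2 B :=
  ⟨P, P, LinearMap.id, 0, fun x => by simp, fun x => by simp⟩

/-- The acyclic 2-periodic complex `K_P^*`: both components `P`, `d1 = 0`, `d0 = id`. -/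
def KPs {B : Type} [Ring B] (P : ModuleCat.{0} Bᵐᵒᵖ) : Cplx2 B :=
  ⟨P, P, 0, LinearMap.id, fun x => by simp, fun _ => rfl⟩

/-- The 2-periodic complex `C_A` associated to a projective resolution
`0 → P2 →(a2) P1 →(a1) P0 →(a0) A → 0`, namely `P1 ⇄ P0 ⊕ P2` with
`d1 : x ↦ (a1 x, 0)` and `d0 : (u, v) ↦ a2 v`. -/
def CA {B : Type} [Ring B] {P0 P1 P2 : Type}
    [AddCommGroup P0] [Module Bᵐᵒᵖ P0] [AddCommGroup P1] [Module Bᵐᵒᵖ P1]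
    [AddCommGroup P2] [Module Bᵐᵒᵖ P2]
    (a1 : P1 →ₗ[Bᵐᵒᵖ] P0) (a2 : P2 →ₗ[Bᵐᵒᵖ] P1) (h : ∀ x, a1 (a2 x) = 0) :
    Cplx2 B where
  X1 := ModuleCat.of Bᵐᵒᵖ P1
  X0 := ModuleCat.of Bᵐᵒᵖ (P0 × P2)
  d1 := (LinearMap.inl Bᵐᵒᵖ P0 P2) ∘ₗ a1
  d0 := a2 ∘ₗ (LinearMap.snd Bᵐᵒᵖ P0 P2)
  h01 := fun _ => map_zero a2
  h10 := fun x => Prod.ext (h x.2) rfl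



/-!
A morphism `C_{A1} → C_{A2}` is a pair `(f₁, f₀)` with `f₀ : P0 ⊕ P2 → Q0 ⊕ Q2`. Since `b2` is
injective, `f₀` is upper triangular and its `(2,2)`-entry is determined by `f₁`; since `P2` is
projective, every `f₁` fitting in a commutative square `b1 ∘ f₁ = g ∘ a1` admits such an entry.
Hence the morphisms are `Hom(P2, Q0) × S`, where `S` is the group of commutative squares from
`a1` to `b1`. Projecting `S` to `g` has kernel `Hom(P1, ker b1) ≅ Hom(P1, Q2)`, and by
projectivity of `P1` its image consists of the `g` with `b0 ∘ g ∘ a1 = 0`, i.e. those for which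
`b0 ∘ g` descends to a map `A1 → A2`. As `P0` is projective and `b0` surjective, every map
`A1 → A2` arises, from a coset of `{g | b0 ∘ g = 0} = Hom(P0, im b1)`; finally
`|Hom(P0, Q1)| = |Hom(P0, Q2)| · |Hom(P0, im b1)|` by exactness of `Hom(P0, -)` on
`0 → Q2 → Q1 → im b1 → 0`.
-/

theorem AddMonoidHom.card_eq_card_ker_mul_card_range {G H : Type*} [AddGroup G] [AddGroup H]
    (f : G →+ H) : Nat.card G = Nat.card f.ker * Nat.card f.range := by
  rw [← f.ker.card_mul_index, AddSubgroup.index_ker]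

theorem Function.Exact.card_eq_card_mul_card_range {G₁ G₂ G₃ : Type*} [AddGroup G₁]
    [AddGroup G₂] [AddGroup G₃] {f : G₁ →+ G₂} {g : G₂ →+ G₃} (hfg : Exact f g)
    (hf : Injective f) : Nat.card G₂ = Nat.card G₁ * Nat.card g.range := by
  rw [g.card_eq_card_ker_mul_card_range, hfg.addMonoidHom_ker_eq,
    Nat.card_congr (f.ofInjective hf).toEquiv.symm]

theorem AddSubgroup.card_comap_of_surjective {G H : Type*} [AddGroup G] [AddGroup H]
    {f : G →+ H} (hf : Surjective f) (S : AddSubgroup H) :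
    Nat.card (S.comap f) = Nat.card f.ker * Nat.card S := by
  rw [(f.addSubgroupComap S).card_eq_card_ker_mul_card_range,
    (f.addSubgroupComap S).range_eq_top_of_surjective
      (f.addSubgroupComap_surjective_of_surjective S hf), AddSubgroup.card_top]
  congr 1
  exact Nat.card_congr
    { toFun := fun x => ⟨x.1.1, Subtype.ext_iff.1 x.2⟩
      invFun := fun x => ⟨⟨x.1, by simp [AddMonoidHom.mem_ker.1 x.2]⟩, Subtype.ext x.2⟩
      left_inv := fun _ => rfl
      right_inv := fun _ => rfl }

theorem Module.Projective.exists_comp_eq_of_range_le {R P M N : Type*} [Ring R]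
    [AddCommGroup P] [Module R P] [AddCommGroup M] [Module R M] [AddCommGroup N] [Module R N]
    [Module.Projective R P] {f : M →ₗ[R] N} {g : P →ₗ[R] N}
    (h : LinearMap.range g ≤ LinearMap.range f) : ∃ g' : P →ₗ[R] M, f ∘ₗ g' = g := by
  obtain ⟨g', hg'⟩ := Module.projective_lifting_property f.rangeRestrict
    (g.codRestrict _ fun x => h ⟨x, rfl⟩) f.surjective_rangeRestrict
  exact ⟨g', LinearMap.ext fun x => congr_arg Subtype.val (LinearMap.congr_fun hg' x)⟩

namespace LinearMap

variable {R M N : Type*} [Ring R] [AddCommGroup M] [Module R M] [AddCommGroup N] [Module R N]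

@[simps]
def postcomp (P : Type*) [AddCommGroup P] [Module R P] (f : M →ₗ[R] N) :
    (P →ₗ[R] M) →+ (P →ₗ[R] N) where
  toFun g := f ∘ₗ g
  map_zero' := comp_zero f
  map_add' g h := comp_add g h f

@[simps]
def precomp (Q : Type*) [AddCommGroup Q] [Module R Q] (f : M →ₗ[R] N) :
    (N →ₗ[R] Q) →+ (M →ₗ[R] Q) where
  toFun g := g ∘ₗ f
  map_zero' := zero_comp f
  map_add' g h := add_comp f h g

variable {P Q : Type*} [AddCommGroup P] [Module R P] [AddCommGroup Q] [Module R Q]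

theorem postcomp_injective {f : M →ₗ[R] N} (hf : Injective f) : Injective (postcomp P f) :=
  fun _ _ h => ext fun x => hf (LinearMap.congr_fun h x)

theorem precomp_injective {f : M →ₗ[R] N} (hf : Surjective f) : Injective (precomp Q f) :=
  fun _ _ h => (cancel_right hf).1 h

theorem postcomp_surjective [Module.Projective R P] {f : M →ₗ[R] N} (hf : Surjective f) :
    Surjective (postcomp P f) := fun g =>
  Module.Projective.exists_comp_eq_of_range_le (by rw [range_eq_top.2 hf]; exact le_top)

theorem exact_postcomp [Module.Projective R P] {f : M →ₗ[R] N} {g : N →ₗ[R] Q}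
    (hfg : Exact f g) : Exact (postcomp P f) (postcomp P g) := fun h => by
  simp only [postcomp_apply, Set.mem_range]
  rw [← range_le_ker_iff, hfg.linearMap_ker_eq]
  refine ⟨Module.Projective.exists_comp_eq_of_range_le, ?_⟩
  rintro ⟨h', rfl⟩
  exact range_comp_le_range h' f

theorem exact_precomp {f : M →ₗ[R] N} {g : N →ₗ[R] P} (hfg : Exact f g) (hg : Surjective g) :
    Exact (precomp Q g) (precomp Q f) := fun φ => by
  simp only [precomp_apply, Set.mem_range]
  refine ⟨fun hφ => ⟨(range f).liftQ φ (range_le_ker_iff.2 hφ) ∘ₗ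
      (hfg.linearEquivOfSurjective hg).symm.toLinearMap, ?_⟩, ?_⟩
  · ext x
    simp
  · rintro ⟨ψ, rfl⟩
    rw [comp_assoc, hfg.linearMap_comp_eq_zero, comp_zero]

end LinearMap

open LinearMap

section ArrowHom

variable {R : Type*} [Ring R]

def arrowHom {M₁ M₀ N₁ N₀ : Type*} [AddCommGroup M₁] [Module R M₁] [AddCommGroup M₀]
    [Module R M₀] [AddCommGroup N₁] [Module R N₁] [AddCommGroup N₀] [Module R N₀]
    (a : M₁ →ₗ[R] M₀) (b : N₁ →ₗ[R] N₀) : AddSubgroup ((M₁ →ₗ[R] N₁) × (M₀ →ₗ[R] N₀)) :=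
  ((postcomp M₁ b).comp (AddMonoidHom.fst _ _) - (precomp N₀ a).comp (AddMonoidHom.snd _ _)).ker

theorem mem_arrowHom {M₁ M₀ N₁ N₀ : Type*} [AddCommGroup M₁] [Module R M₁] [AddCommGroup M₀]
    [Module R M₀] [AddCommGroup N₁] [Module R N₁] [AddCommGroup N₀] [Module R N₀]
    {a : M₁ →ₗ[R] M₀} {b : N₁ →ₗ[R] N₀} {p : (M₁ →ₗ[R] N₁) × (M₀ →ₗ[R] N₀)} :
    p ∈ arrowHom a b ↔ b ∘ₗ p.1 = p.2 ∘ₗ a := by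
  simp [arrowHom, sub_eq_zero]

variable {P Q₂ Q₁ Q₀ A : Type*} [AddCommGroup P] [Module R P] [AddCommGroup Q₂] [Module R Q₂]
  [AddCommGroup Q₁] [Module R Q₁] [AddCommGroup Q₀] [Module R Q₀] [AddCommGroup A] [Module R A]
  {b₂ : Q₂ →ₗ[R] Q₁} {b₁ : Q₁ →ₗ[R] Q₀} {b₀ : Q₀ →ₗ[R] A}

theorem card_linearMap_eq_mul_card_ker_postcomp [Module.Projective R P] (hb₂ : Injective b₂)
    (h₂₁ : Exact b₂ b₁) (h₁₀ : Exact b₁ b₀) :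
    Nat.card (P →ₗ[R] Q₁) = Nat.card (P →ₗ[R] Q₂) * Nat.card (postcomp P b₀).ker := by
  rw [(exact_postcomp h₂₁).card_eq_card_mul_card_range (postcomp_injective hb₂),
    (exact_postcomp h₁₀).addMonoidHom_ker_eq]

theorem card_arrowHom {P₁ P₀ A' : Type*} [AddCommGroup P₁] [Module R P₁] [AddCommGroup P₀]
    [Module R P₀] [AddCommGroup A'] [Module R A'] [Module.Projective R P₁]
    [Module.Projective R P₀] {a₁ : P₁ →ₗ[R] P₀} {a₀ : P₀ →ₗ[R] A'}
    (ha : Exact a₁ a₀) (ha₀ : Surjective a₀) (hb₂ : Injective b₂) (h₂₁ : Exact b₂ b₁)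
    (h₁₀ : Exact b₁ b₀) (hb₀ : Surjective b₀) :
    Nat.card (arrowHom a₁ b₁) =
      Nat.card (P₁ →ₗ[R] Q₂) * (Nat.card (postcomp P₀ b₀).ker * Nat.card (A' →ₗ[R] A)) := by
  let ι : (P₁ →ₗ[R] Q₂) →+ arrowHom a₁ b₁ := ((postcomp P₁ b₂).prod 0).codRestrict _
    fun f => mem_arrowHom.2 <| show b₁ ∘ₗ b₂ ∘ₗ f = 0 ∘ₗ a₁ by
      rw [← LinearMap.comp_assoc, h₂₁.linearMap_comp_eq_zero, zero_comp, zero_comp]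
  let π : arrowHom a₁ b₁ →+ (P₀ →ₗ[R] Q₀) := (AddMonoidHom.snd _ _).comp (arrowHom a₁ b₁).subtype
  have hι : Injective ι := fun f g h => postcomp_injective hb₂ congr(($h).1.1)
  have hιπ : Exact ι π := by
    rintro ⟨⟨f₁, g⟩, hfg⟩
    refine ⟨fun (hg : g = 0) => ?_, fun ⟨f, hf⟩ => hf ▸ rfl⟩
    subst hg
    obtain ⟨f, hf⟩ := (exact_postcomp h₂₁ f₁).1 (by simpa using mem_arrowHom.1 hfg)
    exact ⟨f, Subtype.ext (Prod.ext hf rfl)⟩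
  have hrange : π.range = (precomp A a₀).range.comap (postcomp P₀ b₀) := by
    ext g
    calc g ∈ π.range ↔ ∃ f₁, b₁ ∘ₗ f₁ = g ∘ₗ a₁ :=
          ⟨fun ⟨⟨⟨f₁, _⟩, h⟩, hg⟩ => ⟨f₁, hg ▸ mem_arrowHom.1 h⟩,
            fun ⟨f₁, h⟩ => ⟨⟨(f₁, g), mem_arrowHom.2 h⟩, rfl⟩⟩
      _ ↔ (b₀ ∘ₗ g) ∘ₗ a₁ = 0 := by
        rw [LinearMap.comp_assoc]
        exact (exact_postcomp h₁₀ _).symm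
      _ ↔ _ := exact_precomp ha ha₀ (b₀ ∘ₗ g)
  rw [hιπ.card_eq_card_mul_card_range hι, hrange,
    AddSubgroup.card_comap_of_surjective (postcomp_surjective hb₀),
    Nat.card_congr ((precomp A a₀).ofInjective (precomp_injective ha₀)).toEquiv.symm]

end ArrowHom

namespace CAHom

variable {B : Type} [Ring B] {P₀ P₁ P₂ Q₀ Q₁ Q₂ : Type}
  [AddCommGroup P₀] [Module Bᵐᵒᵖ P₀] [AddCommGroup P₁] [Module Bᵐᵒᵖ P₁]
  [AddCommGroup P₂] [Module Bᵐᵒᵖ P₂] [AddCommGroup Q₀] [Module Bᵐᵒᵖ Q₀]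
  [AddCommGroup Q₁] [Module Bᵐᵒᵖ Q₁] [AddCommGroup Q₂] [Module Bᵐᵒᵖ Q₂]
  {a₁ : P₁ →ₗ[Bᵐᵒᵖ] P₀} {a₂ : P₂ →ₗ[Bᵐᵒᵖ] P₁} {b₁ : Q₁ →ₗ[Bᵐᵒᵖ] Q₀} {b₂ : Q₂ →ₗ[Bᵐᵒᵖ] Q₁}
  {hc : ∀ x, a₁ (a₂ x) = 0} {hc' : ∀ x, b₁ (b₂ x) = 0}
  {f₁ : P₁ →ₗ[Bᵐᵒᵖ] Q₁} {f₀ : P₀ × P₂ →ₗ[Bᵐᵒᵖ] Q₀ × Q₂}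

/-- The upper triangular block matrix `[[g₀₀, g₀₂], [0, g₂₂]]`. -/
def blockHom (g₀₀ : P₀ →ₗ[Bᵐᵒᵖ] Q₀) (g₀₂ : P₂ →ₗ[Bᵐᵒᵖ] Q₀) (g₂₂ : P₂ →ₗ[Bᵐᵒᵖ] Q₂) :
    P₀ × P₂ →ₗ[Bᵐᵒᵖ] Q₀ × Q₂ :=
  (inl _ _ _ ∘ₗ g₀₀).coprod (g₀₂.prod g₂₂)

theorem blockHom_apply (g₀₀ : P₀ →ₗ[Bᵐᵒᵖ] Q₀) (g₀₂ : P₂ →ₗ[Bᵐᵒᵖ] Q₀) (g₂₂ : P₂ →ₗ[Bᵐᵒᵖ] Q₂)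
    (z : P₀ × P₂) : blockHom g₀₀ g₀₂ g₂₂ z = (g₀₀ z.1 + g₀₂ z.2, g₂₂ z.2) := by
  simp [blockHom]

theorem fst_comp_blockHom_comp_inl (g₀₀ : P₀ →ₗ[Bᵐᵒᵖ] Q₀) (g₀₂ : P₂ →ₗ[Bᵐᵒᵖ] Q₀)
    (g₂₂ : P₂ →ₗ[Bᵐᵒᵖ] Q₂) : fst _ _ _ ∘ₗ blockHom g₀₀ g₀₂ g₂₂ ∘ₗ inl _ _ _ = g₀₀ := by
  ext; simp [blockHom_apply]

theorem fst_comp_blockHom_comp_inr (g₀₀ : P₀ →ₗ[Bᵐᵒᵖ] Q₀) (g₀₂ : P₂ →ₗ[Bᵐᵒᵖ] Q₀)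
    (g₂₂ : P₂ →ₗ[Bᵐᵒᵖ] Q₂) : fst _ _ _ ∘ₗ blockHom g₀₀ g₀₂ g₂₂ ∘ₗ inr _ _ _ = g₀₂ := by
  ext; simp [blockHom_apply]

theorem mem_homSet_iff :
    (f₁, f₀) ∈ (CA a₁ a₂ hc).homSet (CA b₁ b₂ hc') ↔
      (∀ x, (b₁ (f₁ x), 0) = f₀ (a₁ x, 0)) ∧ ∀ z, b₂ (f₀ z).2 = f₁ (a₂ z.2) :=
  Iff.rfl

theorem blockHom_mem_homSet {g₀₀ : P₀ →ₗ[Bᵐᵒᵖ] Q₀} (g₀₂ : P₂ →ₗ[Bᵐᵒᵖ] Q₀)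
    {g₂₂ : P₂ →ₗ[Bᵐᵒᵖ] Q₂} (h₀₀ : b₁ ∘ₗ f₁ = g₀₀ ∘ₗ a₁) (h₂₂ : b₂ ∘ₗ g₂₂ = f₁ ∘ₗ a₂) :
    (f₁, blockHom g₀₀ g₀₂ g₂₂) ∈ (CA a₁ a₂ hc).homSet (CA b₁ b₂ hc') := by
  refine mem_homSet_iff.2 ⟨fun x => ?_, fun z => ?_⟩
  · rw [blockHom_apply, map_zero, map_zero, add_zero]
    exact Prod.ext (LinearMap.congr_fun h₀₀ x) rfl
  · rw [blockHom_apply]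
    exact LinearMap.congr_fun h₂₂ z.2

theorem fst_comp_inl_mem_arrowHom (hf : (f₁, f₀) ∈ (CA a₁ a₂ hc).homSet (CA b₁ b₂ hc')) :
    (f₁, fst _ _ _ ∘ₗ f₀ ∘ₗ inl _ _ _) ∈ arrowHom a₁ b₁ :=
  mem_arrowHom.2 <| LinearMap.ext fun x => congrArg Prod.fst ((mem_homSet_iff.1 hf).1 x)

theorem b₂_comp_snd_comp_inr (hf : (f₁, f₀) ∈ (CA a₁ a₂ hc).homSet (CA b₁ b₂ hc')) :
    b₂ ∘ₗ snd _ _ _ ∘ₗ f₀ ∘ₗ inr _ _ _ = f₁ ∘ₗ a₂ :=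
  LinearMap.ext fun v => (mem_homSet_iff.1 hf).2 (0, v)

theorem eq_blockHom (hb₂ : Injective b₂)
    (hf : (f₁, f₀) ∈ (CA a₁ a₂ hc).homSet (CA b₁ b₂ hc')) :
    f₀ = blockHom (fst _ _ _ ∘ₗ f₀ ∘ₗ inl _ _ _) (fst _ _ _ ∘ₗ f₀ ∘ₗ inr _ _ _)
      (snd _ _ _ ∘ₗ f₀ ∘ₗ inr _ _ _) := by
  have hinl : ∀ u, (f₀ (u, 0)).2 = 0 := fun u =>
    hb₂ <| by rw [(mem_homSet_iff.1 hf).2, map_zero, map_zero, map_zero]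
  ext z <;> simp [blockHom_apply, hinl, Prod.mk_zero_zero]

theorem eq_of_fst_comp_eq (hb₂ : Injective b₂) {f₀' : P₀ × P₂ →ₗ[Bᵐᵒᵖ] Q₀ × Q₂}
    (hf : (f₁, f₀) ∈ (CA a₁ a₂ hc).homSet (CA b₁ b₂ hc'))
    (hf' : (f₁, f₀') ∈ (CA a₁ a₂ hc).homSet (CA b₁ b₂ hc'))
    (h₀₀ : fst _ _ _ ∘ₗ f₀ ∘ₗ inl _ _ _ = fst _ _ _ ∘ₗ f₀' ∘ₗ inl _ _ _)
    (h₀₂ : fst _ _ _ ∘ₗ f₀ ∘ₗ inr _ _ _ = fst _ _ _ ∘ₗ f₀' ∘ₗ inr _ _ _) : f₀ = f₀' := by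
  have h₂₂ : snd _ _ _ ∘ₗ f₀ ∘ₗ inr _ _ _ = snd _ _ _ ∘ₗ f₀' ∘ₗ inr _ _ _ :=
    postcomp_injective hb₂ <| (b₂_comp_snd_comp_inr hf).trans (b₂_comp_snd_comp_inr hf').symm
  rw [eq_blockHom hb₂ hf, eq_blockHom hb₂ hf', h₀₀, h₀₂, h₂₂]

noncomputable def homEquiv [Module.Projective Bᵐᵒᵖ P₂] (hb₂ : Injective b₂)
    (h₂₁ : Exact b₂ b₁) :
    (CA a₁ a₂ hc).Hom (CA b₁ b₂ hc') ≃ (P₂ →ₗ[Bᵐᵒᵖ] Q₀) × arrowHom a₁ b₁ := by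
  refine Equiv.ofBijective (fun f => (fst _ _ _ ∘ₗ f.1.2 ∘ₗ inr _ _ _,
    ⟨(f.1.1, fst _ _ _ ∘ₗ f.1.2 ∘ₗ inl _ _ _), fst_comp_inl_mem_arrowHom f.2⟩)) ⟨?_, ?_⟩
  · rintro ⟨⟨f₁, f₀⟩, hf⟩ ⟨⟨f₁', f₀'⟩, hf'⟩ h
    obtain ⟨h₀₂, h'⟩ := Prod.ext_iff.1 h
    obtain ⟨rfl, h₀₀⟩ := Prod.ext_iff.1 (Subtype.ext_iff.1 h')
    exact Subtype.ext (Prod.ext rfl (eq_of_fst_comp_eq hb₂ hf hf' h₀₀ h₀₂))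
  · rintro ⟨g₀₂, ⟨⟨f₁, g₀₀⟩, hsq⟩⟩
    have hsq : b₁ ∘ₗ f₁ = g₀₀ ∘ₗ a₁ := mem_arrowHom.1 hsq
    obtain ⟨g₂₂, hg₂₂⟩ := (exact_postcomp (P := P₂) h₂₁ (f₁ ∘ₗ a₂)).1 <| by
      rw [postcomp_apply, ← LinearMap.comp_assoc, hsq, LinearMap.comp_assoc,
        show a₁ ∘ₗ a₂ = 0 from LinearMap.ext hc, comp_zero]
    refine ⟨⟨(f₁, blockHom g₀₀ g₀₂ g₂₂), blockHom_mem_homSet g₀₂ hsq hg₂₂⟩, ?_⟩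
    exact Prod.ext (fst_comp_blockHom_comp_inr g₀₀ g₀₂ g₂₂)
      (Subtype.ext (Prod.ext rfl (fst_comp_blockHom_comp_inl g₀₀ g₀₂ g₂₂)))

end CAHom

theorem card_hom_complexes_general
    (B : Type) [Ring B]
    (A1 P0 P1 P2 : Type)
    [AddCommGroup A1] [Module Bᵐᵒᵖ A1]
    [AddCommGroup P0] [Module Bᵐᵒᵖ P0]
    [AddCommGroup P1] [Module Bᵐᵒᵖ P1]
    [AddCommGroup P2] [Module Bᵐᵒᵖ P2]
    (a0 : P0 →ₗ[Bᵐᵒᵖ] A1) (a1 : P1 →ₗ[Bᵐᵒᵖ] P0) (a2 : P2 →ₗ[Bᵐᵒᵖ] P1)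
    (hproj0 : Module.Projective Bᵐᵒᵖ P0) (hproj1 : Module.Projective Bᵐᵒᵖ P1)
    (hproj2 : Module.Projective Bᵐᵒᵖ P2)
    (hex1 : LinearMap.range a1 = LinearMap.ker a0) (hsurj : Surjective a0)
    (hc : ∀ x, a1 (a2 x) = 0)
    (A2 Q0 Q1 Q2 : Type)
    [AddCommGroup A2] [Module Bᵐᵒᵖ A2]
    [AddCommGroup Q0] [Module Bᵐᵒᵖ Q0]
    [AddCommGroup Q1] [Module Bᵐᵒᵖ Q1]
    [AddCommGroup Q2] [Module Bᵐᵒᵖ Q2]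
    (b0 : Q0 →ₗ[Bᵐᵒᵖ] A2) (b1 : Q1 →ₗ[Bᵐᵒᵖ] Q0) (b2 : Q2 →ₗ[Bᵐᵒᵖ] Q1)
    (hinj' : Injective b2) (hex2' : LinearMap.range b2 = LinearMap.ker b1)
    (hex1' : LinearMap.range b1 = LinearMap.ker b0) (hsurj' : Surjective b0)
    (hc' : ∀ x, b1 (b2 x) = 0)
    :
    Nat.card ((CA a1 a2 hc).Hom (CA b1 b2 hc')) * Nat.card (P0 →ₗ[Bᵐᵒᵖ] Q2) =
    Nat.card (A1 →ₗ[Bᵐᵒᵖ] A2) * Nat.card (P2 →ₗ[Bᵐᵒᵖ] Q0) *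
      Nat.card (P1 →ₗ[Bᵐᵒᵖ] Q2) * Nat.card (P0 →ₗ[Bᵐᵒᵖ] Q1) := by
  have ha : Exact a1 a0 := exact_iff.2 hex1.symm
  have hb₂₁ : Exact b2 b1 := exact_iff.2 hex2'.symm
  have hb₁₀ : Exact b1 b0 := exact_iff.2 hex1'.symm
  rw [Nat.card_congr (CAHom.homEquiv hinj' hb₂₁), Nat.card_prod,
    card_arrowHom ha hsurj hinj' hb₂₁ hb₁₀ hsurj',
    card_linearMap_eq_mul_card_ker_postcomp (P := P0) hinj' hb₂₁ hb₁₀]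
  ring

/-- `|Hom_{C_2(mod B)}(C_{A1}, C_{A2})| =
|Hom_B(A1,A2)| ⬝ |Hom(P2,Q0)| ⬝ |Hom(P1,Q2)| ⬝ |Hom(P0,Q1)| / |Hom(P0,Q2)|`. -/
theorem card_hom_complexes
    (k : Type) [Field k] [Fintype k]
    (B : Type) [Ring B] [Algebra k B] [FiniteDimensional k B]
    (hgldim : GlobalDimLE B 2)
    (A1 P0 P1 P2 : Type)
    [AddCommGroup A1] [Module Bᵐᵒᵖ A1] [Module.Finite Bᵐᵒᵖ A1]
    [AddCommGroup P0] [Module Bᵐᵒᵖ P0] [Module.Finite Bᵐᵒᵖ P0]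
    [AddCommGroup P1] [Module Bᵐᵒᵖ P1] [Module.Finite Bᵐᵒᵖ P1]
    [AddCommGroup P2] [Module Bᵐᵒᵖ P2] [Module.Finite Bᵐᵒᵖ P2]
    (a0 : P0 →ₗ[Bᵐᵒᵖ] A1) (a1 : P1 →ₗ[Bᵐᵒᵖ] P0) (a2 : P2 →ₗ[Bᵐᵒᵖ] P1)
    (hproj0 : Module.Projective Bᵐᵒᵖ P0) (hproj1 : Module.Projective Bᵐᵒᵖ P1)
    (hproj2 : Module.Projective Bᵐᵒᵖ P2)
    (hinj : Injective a2) (hex2 : LinearMap.range a2 = LinearMap.ker a1)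
    (hex1 : LinearMap.range a1 = LinearMap.ker a0) (hsurj : Surjective a0)
    (hmin1 : Superfluous (LinearMap.range a1))
    (hmin2 : Superfluous (LinearMap.range a2))
    (hc : ∀ x, a1 (a2 x) = 0)
    (A2 Q0 Q1 Q2 : Type)
    [AddCommGroup A2] [Module Bᵐᵒᵖ A2] [Module.Finite Bᵐᵒᵖ A2]
    [AddCommGroup Q0] [Module Bᵐᵒᵖ Q0] [Module.Finite Bᵐᵒᵖ Q0]
    [AddCommGroup Q1] [Module Bᵐᵒᵖ Q1] [Module.Finite Bᵐᵒᵖ Q1]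
    [AddCommGroup Q2] [Module Bᵐᵒᵖ Q2] [Module.Finite Bᵐᵒᵖ Q2]
    (b0 : Q0 →ₗ[Bᵐᵒᵖ] A2) (b1 : Q1 →ₗ[Bᵐᵒᵖ] Q0) (b2 : Q2 →ₗ[Bᵐᵒᵖ] Q1)
    (hproj0' : Module.Projective Bᵐᵒᵖ Q0) (hproj1' : Module.Projective Bᵐᵒᵖ Q1)
    (hproj2' : Module.Projective Bᵐᵒᵖ Q2)
    (hinj' : Injective b2) (hex2' : LinearMap.range b2 = LinearMap.ker b1)
    (hex1' : LinearMap.range b1 = LinearMap.ker b0) (hsurj' : Surjective b0)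
    (hmin1' : Superfluous (LinearMap.range b1))
    (hmin2' : Superfluous (LinearMap.range b2))
    (hc' : ∀ x, b1 (b2 x) = 0)
    :
    Nat.card ((CA a1 a2 hc).Hom (CA b1 b2 hc')) * Nat.card (P0 →ₗ[Bᵐᵒᵖ] Q2) =
    Nat.card (A1 →ₗ[Bᵐᵒᵖ] A2) * Nat.card (P2 →ₗ[Bᵐᵒᵖ] Q0) *
      Nat.card (P1 →ₗ[Bᵐᵒᵖ] Q2) * Nat.card (P0 →ₗ[Bᵐᵒᵖ] Q1) :=
  card_hom_complexes_general B A1 P0 P1 P2 a0 a1 a2 hproj0 hproj1 hproj2 hex1 hsurj hc A2 Q0 Q1 Q2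
    b0 b1 b2 hinj' hex2' hex1' hsurj' hc'
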